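/- arXiv:2109.06645 — 7 statements merged into one kernel-verified Lean document; each statement's English description precedes it below -/
import Mathlib

section
/- 3C-criterion: Let 𝒟 : 𝒩 = 𝒩₁ ∪ ⋯ ∪ 𝒩ₖ be a decomposition with d = |𝒞_𝒟| common complexes, and let hᵢ = |𝒞ᵢ ∩ 𝒞_𝒟|. Then 𝒟 is incidence independent if and only if Σᵢ ℓᵢ − ℓ = Σᵢ hᵢ − d. -/
open Finset

/-- The set of complexes of subnetwork `i` (complexes occurring in its reactions). -/
def cplxSet {C R : Type} (src tgt : R → C) {k : ℕ} (part : R → Fin k) (i : Fin k) : Set C :=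
  {c | ∃ r, part r = i ∧ (src r = c ∨ tgt r = c)}

/-- The set of common complexes of the decomposition: complexes occurring in at least
two distinct subnetworks. -/
def commonSet {C R : Type} (src tgt : R → C) {k : ℕ} (part : R → Fin k) : Set C :=
  {c | ∃ i j : Fin k, i ≠ j ∧ c ∈ cplxSet src tgt part i ∧ c ∈ cplxSet src tgt part j}

/-- Underlying (undirected) graph of the reaction network. -/
def parentGraph {C R : Type} (src tgt : R → C) : SimpleGraph C :=
  SimpleGraph.fromRel (fun a b => ∃ r, src r = a ∧ tgt r = b)

/-- Underlying graph of subnetwork `i`. -/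
def subGraph {C R : Type} (src tgt : R → C) {k : ℕ} (part : R → Fin k) (i : Fin k) :
    SimpleGraph C :=
  SimpleGraph.fromRel (fun a b => ∃ r, part r = i ∧ src r = a ∧ tgt r = b)

/-- The incidence map `I_a : ℝ^ℛ → ℝ^𝒞`. -/
noncomputable def incid {C R : Type} [Fintype R] [DecidableEq C] (src tgt : R → C) :
    (R → ℝ) →ₗ[ℝ] (C → ℝ) :=
  ∑ r : R, (LinearMap.toSpanSingleton ℝ (C → ℝ)
      (Pi.single (tgt r) 1 - Pi.single (src r) 1)).comp (LinearMap.proj r)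

/-- The incidence map of subnetwork `i`. -/
noncomputable def incidSub {C R : Type} [Fintype R] [DecidableEq C] (src tgt : R → C)
    {k : ℕ} (part : R → Fin k) (i : Fin k) : (R → ℝ) →ₗ[ℝ] (C → ℝ) :=
  ∑ r ∈ Finset.univ.filter (fun r => part r = i),
    (LinearMap.toSpanSingleton ℝ (C → ℝ)
      (Pi.single (tgt r) 1 - Pi.single (src r) 1)).comp (LinearMap.proj r)

/-- Incidence independence: the image of the incidence map of the parent network is
the (internal) direct sum of the images of the subnetworks' incidence maps. -/
def IncIndep {C R : Type} [Fintype R] [DecidableEq C] (src tgt : R → C)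
    {k : ℕ} (part : R → Fin k) : Prop :=
  LinearMap.range (incid src tgt) = (⨆ i : Fin k, LinearMap.range (incidSub src tgt part i)) ∧
  ∀ f : Fin k → (C → ℝ), (∀ i, f i ∈ LinearMap.range (incidSub src tgt part i)) →
    (∑ i, f i) = 0 → ∀ i, f i = 0

/-- Number of linkage classes of subnetwork `i`: connected components of its underlying
graph that meet its complex set. -/
noncomputable def numLCsub {C R : Type} (src tgt : R → C) {k : ℕ} (part : R → Fin k)
    (i : Fin k) : ℕ :=
  Nat.card {comp : (subGraph src tgt part i).ConnectedComponent //
    ∃ c ∈ cplxSet src tgt part i, (subGraph src tgt part i).connectedComponentMk c = comp}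

/-! For a graph on a finite vertex set `V`, the span of the vectors `e a - e b` over its edges
is the kernel of the surjective map that sums a function over each connected component, so
its dimension is `|V|` minus the number of components. For the parent network this gives
rank `n - ℓ`; in subnetwork `i` the complexes outside `𝒞ᵢ` are isolated components, so its
rank is `nᵢ - ℓᵢ`. The image of the incidence map is the sum of the images of the subnetworks,
and that sum is direct iff the ranks add up; the counting identity `n = d + Σᵢ (nᵢ - hᵢ)`
turns `Σᵢ (nᵢ - ℓᵢ) = n - ℓ` into the criterion. -/

open Module Submodule

section LinearAlgebra

theorem range_sum_toSpanSingleton_comp_proj {K M ι : Type*} [Semiring K] [AddCommMonoid M]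
    [Module K M] (v : ι → M) (s : Finset ι) :
    LinearMap.range (∑ i ∈ s, (LinearMap.toSpanSingleton K M (v i)).comp (LinearMap.proj i)) =
      span K (v '' s) := by
  classical
  refine le_antisymm ?_ (span_le.mpr ?_)
  · rintro _ ⟨x, rfl⟩
    simp only [LinearMap.sum_apply, LinearMap.comp_apply, LinearMap.proj_apply,
      LinearMap.toSpanSingleton_apply]
    exact sum_mem fun i hi => smul_mem _ _ (subset_span ⟨i, hi, rfl⟩)
  · rintro _ ⟨i, hi, rfl⟩
    refine ⟨Pi.single i 1, ?_⟩
    rw [LinearMap.sum_apply, Finset.sum_eq_single_of_mem i hi]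
    · simp
    · intro j _ hj
      simp [Pi.single_eq_of_ne hj]

variable {K M : Type*} [DivisionRing K] [AddCommGroup M] [Module K M]

theorem LinearMap.injective_iff_finrank_range_eq {N : Type*} [AddCommGroup N] [Module K N]
    [FiniteDimensional K M] (f : M →ₗ[K] N) :
    Function.Injective f ↔ finrank K (LinearMap.range f) = finrank K M := by
  rw [← LinearMap.ker_eq_bot, ← Submodule.finrank_eq_zero]
  have := LinearMap.finrank_range_add_finrank_ker f
  omega

theorem sum_eq_zero_imp_eq_zero_iff_sum_finrank_eq [FiniteDimensional K M] {ι : Type*}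
    [Fintype ι] (V : ι → Submodule K M) :
    (∀ f : ι → M, (∀ i, f i ∈ V i) → ∑ i, f i = 0 → ∀ i, f i = 0) ↔
      ∑ i, finrank K (V i) = finrank K ↥(⨆ i, V i) := by
  classical
  let φ : (∀ i, V i) →ₗ[K] M := LinearMap.lsum K (fun i => V i) ℕ fun i => (V i).subtype
  have hφ : ∀ x, φ x = ∑ i, (x i : M) := fun x => by simp [φ]
  have hrange : LinearMap.range φ = ⨆ i, V i := by
    refine le_antisymm ?_ (iSup_le fun j w hw => ⟨Pi.single j ⟨w, hw⟩, ?_⟩)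
    · rintro _ ⟨x, rfl⟩
      rw [hφ]
      exact sum_mem fun i _ => mem_iSup_of_mem i (x i).2
    · rw [hφ, Finset.sum_eq_single j]
      · simp
      · intro i _ hi
        simp [Pi.single_eq_of_ne hi]
      · simp
  rw [← hrange, ← Module.finrank_pi_fintype, eq_comm,
    ← LinearMap.injective_iff_finrank_range_eq, injective_iff_map_eq_zero]
  constructor
  · intro h x hx
    funext i
    exact Subtype.ext (h (fun i => x i) (fun i => (x i).2) ((hφ x).symm.trans hx) i)
  · intro h f hf hsum i
    have := h (fun i => ⟨f i, hf i⟩) ((hφ _).trans hsum)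
    exact congrArg Subtype.val (congrFun this i)

end LinearAlgebra

theorem ncard_add_sum_ncard_eq_card_add_sum_ncard_inter {α ι : Type*} [Finite α] [Fintype ι]
    (S : ι → Set α) (T : Set α) (hdisj : Pairwise fun i j => Disjoint (S i \ T) (S j \ T))
    (hcover : ∀ a ∉ T, ∃ i, a ∈ S i) :
    T.ncard + ∑ i, (S i).ncard = Nat.card α + ∑ i, (S i ∩ T).ncard := by
  have hunion : ⋃ i, S i \ T = Tᶜ := by
    ext a
    simp only [Set.mem_iUnion, Set.mem_sdiff, Set.mem_compl_iff]
    exact ⟨fun ⟨_, _, ha⟩ => ha, fun ha => (hcover a ha).imp fun _ hi => ⟨hi, ha⟩⟩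
  have houtside : ∑ i, (S i \ T).ncard = Tᶜ.ncard := by
    rw [← hunion, Set.ncard_iUnion_of_finite (fun _ => Set.toFinite _) hdisj,
      finsum_eq_sum_of_fintype]
  have hcompl := Set.ncard_add_ncard_compl T
  simp_rw [← Set.ncard_inter_add_ncard_sdiff_eq_ncard (S _) T]
  rw [Finset.sum_add_distrib, houtside]
  omega

namespace SimpleGraph

variable {V : Type*} [DecidableEq V] (K : Type*) [Field K] (G : SimpleGraph V)

def incidenceSpan : Submodule K (V → K) :=
  span K {x | ∃ a b, G.Adj a b ∧ Pi.single a 1 - Pi.single b 1 = x}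

variable {K G} in
theorem single_sub_single_mem_incidenceSpan {a b : V} (h : G.Reachable a b) :
    Pi.single a 1 - Pi.single b 1 ∈ G.incidenceSpan K := by
  obtain ⟨p⟩ := h
  induction p with
  | nil => simp
  | @cons a b c hab _ ih =>
    have hedge : Pi.single a 1 - Pi.single b 1 ∈ G.incidenceSpan K :=
      subset_span ⟨a, b, hab, rfl⟩
    simpa using add_mem hedge ih

variable [Fintype V]

section ComponentSum

variable [DecidableEq G.ConnectedComponent]

noncomputable def componentSum : (V → K) →ₗ[K] (G.ConnectedComponent → K) :=
  ∑ v, (LinearMap.proj v).smulRight (Pi.single (G.connectedComponentMk v) 1)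

noncomputable def componentRep : (G.ConnectedComponent → K) →ₗ[K] (V → K) :=
  ∑ c, (LinearMap.proj c).smulRight (Pi.single c.out 1)

variable {K G}

theorem componentSum_single (v : V) (x : K) :
    G.componentSum K (Pi.single v x) = Pi.single (G.connectedComponentMk v) x := by
  rw [componentSum, LinearMap.sum_apply, Finset.sum_eq_single v]
  · simp [← Pi.single_smul]
  · intro w _ hw
    simp [Pi.single_eq_of_ne hw]
  · simp

theorem componentRep_single (c : G.ConnectedComponent) (x : K) :
    G.componentRep K (Pi.single c x) = Pi.single c.out x := by
  rw [componentRep, LinearMap.sum_apply, Finset.sum_eq_single c]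
  · simp [← Pi.single_smul]
  · intro d _ hd
    simp [Pi.single_eq_of_ne hd]
  · simp

theorem componentSum_comp_componentRep :
    G.componentSum K ∘ₗ G.componentRep K = LinearMap.id :=
  LinearMap.pi_ext fun c x => by
    simp only [LinearMap.comp_apply, componentRep_single, componentSum_single, LinearMap.id_apply]
    rw [show G.connectedComponentMk c.out = c from c.out_eq]

theorem incidenceSpan_le_ker_componentSum :
    G.incidenceSpan K ≤ LinearMap.ker (G.componentSum K) := by
  rw [incidenceSpan, span_le]
  rintro _ ⟨a, b, hab, rfl⟩
  simp [componentSum_single, ConnectedComponent.sound hab.reachable]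

theorem sub_componentRep_componentSum_mem_incidenceSpan (f : V → K) :
    f - G.componentRep K (G.componentSum K f) ∈ G.incidenceSpan K := by
  let L := LinearMap.id - G.componentRep K ∘ₗ G.componentSum K
  change L f ∈ _
  rw [← Finset.univ_sum_single f, map_sum]
  refine sum_mem fun v _ => ?_
  have hv : L (Pi.single v (f v)) =
      f v • (Pi.single v 1 - Pi.single (G.connectedComponentMk v).out 1) := by
    simp [L, componentSum_single, componentRep_single, smul_sub, ← Pi.single_smul]
  rw [hv]
  exact smul_mem _ _ (single_sub_single_mem_incidenceSpan
    (ConnectedComponent.exact (G.connectedComponentMk v).out_eq).symm)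

theorem ker_componentSum : LinearMap.ker (G.componentSum K) = G.incidenceSpan K := by
  refine le_antisymm (fun f hf => ?_) incidenceSpan_le_ker_componentSum
  simpa [LinearMap.mem_ker.mp hf] using
    sub_componentRep_componentSum_mem_incidenceSpan (G := G) f

end ComponentSum

theorem finrank_incidenceSpan_add_card_connectedComponent :
    finrank K (G.incidenceSpan K) + Nat.card G.ConnectedComponent = Fintype.card V := by
  classical
  have hsurj : Function.Surjective (G.componentSum K) :=
    fun g => ⟨G.componentRep K g,
      LinearMap.congr_fun (componentSum_comp_componentRep (G := G)) g⟩
  have := LinearMap.finrank_range_add_finrank_ker (G.componentSum K)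
  rw [LinearMap.range_eq_top.mpr hsurj, finrank_top, ker_componentSum (G := G),
    Module.finrank_fintype_fun_eq_card, Module.finrank_fintype_fun_eq_card] at this
  rw [Nat.card_eq_fintype_card]
  omega

omit [Fintype V] [DecidableEq V] in
theorem eq_of_reachable_of_forall_not_adj {v w : V} (hv : ∀ u, ¬G.Adj v u)
    (h : G.Reachable v w) : v = w := by
  obtain ⟨p⟩ := h
  cases p with
  | nil => rfl
  | cons hadj _ => exact absurd hadj (hv _)

omit [Fintype V] [DecidableEq V] in
theorem card_connectedComponent_eq_add_card_compl [Finite V] (S : Set V)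
    (hS : ∀ v ∉ S, ∀ u, ¬G.Adj v u) :
    Nat.card G.ConnectedComponent =
      Nat.card {c : G.ConnectedComponent // ∃ v ∈ S, G.connectedComponentMk v = c} +
        Nat.card ↥Sᶜ := by
  classical
  let isolated :
      ↥Sᶜ → {c : G.ConnectedComponent // ¬∃ v ∈ S, G.connectedComponentMk v = c} :=
    fun v => ⟨G.connectedComponentMk v, fun ⟨w, hw, hwv⟩ => v.2
      (eq_of_reachable_of_forall_not_adj G (hS v v.2) (ConnectedComponent.exact hwv).symm ▸ hw)⟩
  have hbij : Function.Bijective isolated := by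
    refine ⟨fun v w hvw => Subtype.ext ?_, fun ⟨c, hc⟩ => ?_⟩
    · exact eq_of_reachable_of_forall_not_adj G (hS v v.2)
        (ConnectedComponent.exact (congrArg Subtype.val hvw))
    · induction c using ConnectedComponent.ind with
      | h v => exact ⟨⟨v, fun hv => hc ⟨v, hv, rfl⟩⟩, rfl⟩
  rw [Nat.card_eq_of_bijective isolated hbij, ← Nat.card_sum,
    Nat.card_congr (Equiv.sumCompl _)]

end SimpleGraph

section ReactionNetwork

variable {C R : Type} (src tgt : R → C) {k : ℕ} (part : R → Fin k)

theorem mem_cplxSet_of_subGraph_adj {i : Fin k} {a b : C}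
    (h : (subGraph src tgt part i).Adj a b) :
    a ∈ cplxSet src tgt part i := by
  obtain ⟨-, ⟨r, hr, ha, -⟩ | ⟨r, hr, -, ha⟩⟩ := SimpleGraph.fromRel_adj _ _ _ |>.mp h
  exacts [⟨r, hr, Or.inl ha⟩, ⟨r, hr, Or.inr ha⟩]

theorem card_commonSet_add_sum_card_cplxSet [Fintype C]
    (hiso : ∀ c : C, ∃ r, src r = c ∨ tgt r = c) :
    Nat.card ↥(commonSet src tgt part) + ∑ i, Nat.card ↥(cplxSet src tgt part i) =
      Fintype.card C + ∑ i, Nat.card ↥(cplxSet src tgt part i ∩ commonSet src tgt part) := by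
  simp only [Nat.card_coe_set_eq]
  rw [← Nat.card_eq_fintype_card]
  refine ncard_add_sum_ncard_eq_card_add_sum_ncard_inter _ _ ?_ fun c _ => ?_
  · intro i j hij
    rw [Set.disjoint_left]
    rintro c ⟨hci, hcT⟩ ⟨hcj, -⟩
    exact hcT ⟨i, j, hij, hci, hcj⟩
  · obtain ⟨r, hr⟩ := hiso c
    exact ⟨part r, r, rfl, hr⟩

variable [DecidableEq C]

theorem span_image_reactionVec_eq_incidenceSpan (s : Set R) :
    span ℝ ((fun r => Pi.single (tgt r) (1 : ℝ) - Pi.single (src r) 1) '' s) =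
      (SimpleGraph.fromRel fun a b => ∃ r ∈ s, src r = a ∧ tgt r = b).incidenceSpan ℝ := by
  refine le_antisymm (span_le.mpr ?_) (span_le.mpr ?_)
  · rintro _ ⟨r, hr, rfl⟩
    by_cases hloop : src r = tgt r
    · simp [hloop]
    · exact subset_span ⟨tgt r, src r, ⟨Ne.symm hloop, Or.inr ⟨r, hr, rfl, rfl⟩⟩, rfl⟩
  · rintro _ ⟨a, b, hab, rfl⟩
    obtain ⟨-, ⟨r, hr, rfl, rfl⟩ | ⟨r, hr, rfl, rfl⟩⟩ :=
      SimpleGraph.fromRel_adj _ _ _ |>.mp hab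
    · rw [← neg_sub]
      exact neg_mem (subset_span ⟨r, hr, rfl⟩)
    · exact subset_span ⟨r, hr, rfl⟩

variable [Fintype R]

theorem range_incid_eq_iSup_range_incidSub :
    LinearMap.range (incid src tgt) = ⨆ i, LinearMap.range (incidSub src tgt part i) := by
  simp only [incid, incidSub, range_sum_toSpanSingleton_comp_proj, ← span_iUnion]
  congr 1
  ext v
  simp

variable [Fintype C]

theorem finrank_range_incid_add_card_connectedComponent :
    finrank ℝ (LinearMap.range (incid src tgt)) +
      Nat.card (parentGraph src tgt).ConnectedComponent = Fintype.card C := by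
  have hgraph : parentGraph src tgt =
      SimpleGraph.fromRel fun a b => ∃ r ∈ Set.univ, src r = a ∧ tgt r = b := by
    simp [parentGraph]
  rw [incid, range_sum_toSpanSingleton_comp_proj, Finset.coe_univ,
    span_image_reactionVec_eq_incidenceSpan, hgraph]
  exact SimpleGraph.finrank_incidenceSpan_add_card_connectedComponent ℝ _

theorem finrank_range_incidSub_add_numLCsub (i : Fin k) :
    finrank ℝ (LinearMap.range (incidSub src tgt part i)) + numLCsub src tgt part i =
      Nat.card ↥(cplxSet src tgt part i) := by
  have hrank : finrank ℝ (LinearMap.range (incidSub src tgt part i)) +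
      Nat.card (subGraph src tgt part i).ConnectedComponent = Fintype.card C := by
    rw [incidSub, range_sum_toSpanSingleton_comp_proj, Finset.coe_filter_univ,
      span_image_reactionVec_eq_incidenceSpan]
    exact (subGraph src tgt part i).finrank_incidenceSpan_add_card_connectedComponent ℝ
  have hcomponents := (subGraph src tgt part i).card_connectedComponent_eq_add_card_compl
    (cplxSet src tgt part i)
    fun a ha b hab => ha (mem_cplxSet_of_subGraph_adj src tgt part hab)
  have hcompl := Set.ncard_add_ncard_compl (cplxSet src tgt part i)
  rw [numLCsub]
  simp only [Nat.card_coe_set_eq, Nat.card_eq_fintype_card] at *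
  omega

theorem incIndep_iff_sum_finrank_eq :
    IncIndep src tgt part ↔ ∑ i, finrank ℝ (LinearMap.range (incidSub src tgt part i)) =
      finrank ℝ (LinearMap.range (incid src tgt)) := by
  rw [IncIndep, sum_eq_zero_imp_eq_zero_iff_sum_finrank_eq,
    ← range_incid_eq_iSup_range_incidSub]
  exact and_iff_right rfl

end ReactionNetwork

theorem stmt5_general {C R : Type} [Fintype C] [Fintype R] [DecidableEq C]
    (src tgt : R → C)
    (hiso : ∀ c : C, ∃ r, src r = c ∨ tgt r = c)
    {k : ℕ} (part : R → Fin k) :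
    IncIndep src tgt part ↔
      (∑ i : Fin k, (numLCsub src tgt part i : ℤ)) -
          Nat.card (parentGraph src tgt).ConnectedComponent =
        (∑ i : Fin k, (Nat.card ↥(cplxSet src tgt part i ∩ commonSet src tgt part) : ℤ)) -
          Nat.card ↥(commonSet src tgt part) := by
  have hparent := finrank_range_incid_add_card_connectedComponent src tgt
  have hsub : ∑ i, finrank ℝ (LinearMap.range (incidSub src tgt part i)) +
      ∑ i, numLCsub src tgt part i = ∑ i, Nat.card ↥(cplxSet src tgt part i) := by
    rw [← Finset.sum_add_distrib]
    exact Finset.sum_congr rfl fun i _ => finrank_range_incidSub_add_numLCsub src tgt part i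
  have hcount := card_commonSet_add_sum_card_cplxSet src tgt part hiso
  rw [incIndep_iff_sum_finrank_eq]
  push_cast [← Nat.cast_sum]
  omega

/-- 3C-criterion: a decomposition with `d` common complexes and
`hᵢ = |𝒞ᵢ ∩ 𝒞_𝒟|` is incidence independent iff `Σᵢ ℓᵢ − ℓ = Σᵢ hᵢ − d`. -/
theorem stmt5 {C R : Type} [Fintype C] [Fintype R] [DecidableEq C]
    (src tgt : R → C)
    (hloop : ∀ r, src r ≠ tgt r)
    (hiso : ∀ c : C, ∃ r, src r = c ∨ tgt r = c)
    {k : ℕ} (part : R → Fin k) :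
    IncIndep src tgt part ↔
      (∑ i : Fin k, (numLCsub src tgt part i : ℤ)) -
          Nat.card (parentGraph src tgt).ConnectedComponent =
        (∑ i : Fin k, (Nat.card ↥(cplxSet src tgt part i ∩ commonSet src tgt part) : ℤ)) -
          Nat.card ↥(commonSet src tgt part) :=
  stmt5_general src tgt hiso part
end

section
/- Structure theorem for 𝒞-decompositions: a decomposition 𝒩 = 𝒩₁ ∪ ⋯ ∪ 𝒩ₖ is a 𝒞-decomposition (the complex sets 𝒞ᵢ are pairwise disjoint) if and only if each subnetwork 𝒩ᵢ is a union of linkage classes of 𝒩 and each linkage class of 𝒩 is contained in exactly one subnetwork. -/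
open Finset

/-- structure theorem for 𝒞-decompositions: a decomposition is a
𝒞-decomposition (pairwise disjoint complex sets) iff each subnetwork is a union of
linkage classes of `𝒩` and each linkage class is contained in exactly one subnetwork,
i.e. iff the subnetwork assignment of reactions factors through the linkage class
(connected component) of their complexes. -/
theorem stmt7 {C R : Type} [Fintype C] [Fintype R] [DecidableEq C]
    (src tgt : R → C)
    (hloop : ∀ r, src r ≠ tgt r)
    (hiso : ∀ c : C, ∃ r, src r = c ∨ tgt r = c)
    {k : ℕ} (part : R → Fin k) :
    (∀ i j : Fin k, i ≠ j → cplxSet src tgt part i ∩ cplxSet src tgt part j = ∅) ↔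
      ∃ φ : (parentGraph src tgt).ConnectedComponent → Fin k,
        ∀ r : R, part r = φ ((parentGraph src tgt).connectedComponentMk (src r)) := by
  constructor
  · intro hdisj
    -- key: part agrees on reactions sharing a complex
    have key : ∀ c : C, ∀ r r' : R, (src r = c ∨ tgt r = c) → (src r' = c ∨ tgt r' = c) →
        part r = part r' := by
      intro c r r' h1 h2
      by_contra hne
      have := hdisj (part r) (part r') hne
      have hc : c ∈ cplxSet src tgt part (part r) ∩ cplxSet src tgt part (part r') :=
        ⟨⟨r, rfl, h1⟩, ⟨r', rfl, h2⟩⟩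
      rw [this] at hc
      exact hc
    classical
    set f : C → Fin k := fun c => part (hiso c).choose with hf
    have hfc : ∀ (r : R) (c : C), (src r = c ∨ tgt r = c) → f c = part r := by
      intro r c h
      exact key c (hiso c).choose r (hiso c).choose_spec h
    have hadj : ∀ v w, (parentGraph src tgt).Adj v w → f v = f w := by
      intro v w h
      obtain ⟨hne, h | h⟩ := h <;> obtain ⟨r, h1, h2⟩ := h
      · rw [hfc r v (Or.inl h1), hfc r w (Or.inr h2)]
      · rw [hfc r v (Or.inr h2), hfc r w (Or.inl h1)]
    have hwalk : ∀ (v w : C) (p : (parentGraph src tgt).Walk v w), p.IsPath → f v = f w := by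
      intro v w p hp
      clear hp
      induction p with
      | nil => rfl
      | cons h p ih => rw [hadj _ _ h]; exact ih
    refine ⟨SimpleGraph.ConnectedComponent.lift f hwalk, fun r => ?_⟩
    rw [SimpleGraph.ConnectedComponent.lift_mk, hfc r (src r) (Or.inl rfl)]
  · rintro ⟨φ, hφ⟩ i j hij
    ext c
    simp only [Set.mem_inter_iff, Set.mem_empty_iff_false, iff_false]
    rintro ⟨⟨r, hr, hc⟩, ⟨r', hr', hc'⟩⟩
    have hmk : ∀ s : R, (parentGraph src tgt).connectedComponentMk (src s) =
        (parentGraph src tgt).connectedComponentMk (tgt s) := by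
      intro s
      exact SimpleGraph.ConnectedComponent.connectedComponentMk_eq_of_adj
        ⟨hloop s, Or.inl ⟨s, rfl, rfl⟩⟩
    have heq : ∀ s : R, ∀ c' : C, (src s = c' ∨ tgt s = c') →
        part s = φ ((parentGraph src tgt).connectedComponentMk c') := by
      intro s c' h
      rcases h with h | h
      · rw [← h]; exact hφ s
      · rw [← h, ← hmk s]; exact hφ s
    exact hij ((hr ▸ heq r c hc).trans (hr' ▸ heq r' c hc').symm)
end

section
/- Every 𝒞-decomposition of a CRN is incidence independent. -/
open Finset

lemma incid_apply {C R : Type} [Fintype R] [DecidableEq C] (src tgt : R → C) (x : R → ℝ) :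
    incid src tgt x = ∑ r : R, x r • (Pi.single (tgt r) 1 - Pi.single (src r) (1 : ℝ)) := by
  simp [incid]

lemma incidSub_apply {C R : Type} [Fintype R] [DecidableEq C] (src tgt : R → C)
    {k : ℕ} (part : R → Fin k) (i : Fin k) (x : R → ℝ) :
    incidSub src tgt part i x = ∑ r ∈ Finset.univ.filter (fun r => part r = i),
      x r • (Pi.single (tgt r) 1 - Pi.single (src r) (1 : ℝ)) := by
  simp [incidSub]

lemma incidSub_support {C R : Type} [Fintype R] [DecidableEq C] (src tgt : R → C)
    {k : ℕ} (part : R → Fin k) (i : Fin k) (x : R → ℝ) (c : C)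
    (hc : c ∉ cplxSet src tgt part i) : incidSub src tgt part i x c = 0 := by
  rw [incidSub_apply]
  rw [Finset.sum_apply]
  apply Finset.sum_eq_zero
  intro r hr
  simp only [Finset.mem_filter, Finset.mem_univ, true_and] at hr
  have hsrc : src r ≠ c := fun h => hc ⟨r, hr, Or.inl h⟩
  have htgt : tgt r ≠ c := fun h => hc ⟨r, hr, Or.inr h⟩
  simp [Pi.single_eq_of_ne' (Ne.symm hsrc), Pi.single_eq_of_ne' (Ne.symm htgt),
    Pi.single, Function.update_of_ne (Ne.symm hsrc), Function.update_of_ne (Ne.symm htgt)]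

lemma incid_eq_sum {C R : Type} [Fintype R] [DecidableEq C] (src tgt : R → C)
    {k : ℕ} (part : R → Fin k) (x : R → ℝ) :
    incid src tgt x = ∑ i : Fin k, incidSub src tgt part i x := by
  rw [incid_apply]
  simp only [incidSub_apply]
  exact (Finset.sum_fiberwise Finset.univ part
    (fun r => x r • ((Pi.single (tgt r) 1 - Pi.single (src r) 1 : C → ℝ)))).symm

/-- every 𝒞-decomposition (subnetworks with pairwise disjoint complex
sets) is incidence independent. -/
theorem stmt8 {C R : Type} [Fintype C] [Fintype R] [DecidableEq C]
    (src tgt : R → C)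
    (hloop : ∀ r, src r ≠ tgt r)
    (hiso : ∀ c : C, ∃ r, src r = c ∨ tgt r = c)
    {k : ℕ} (part : R → Fin k)
    (hC : ∀ i j : Fin k, i ≠ j → cplxSet src tgt part i ∩ cplxSet src tgt part j = ∅) :
    IncIndep src tgt part := by
  constructor
  · apply le_antisymm
    · rintro y ⟨x, rfl⟩
      rw [incid_eq_sum src tgt part]
      exact Submodule.sum_mem _ fun i _ =>
        Submodule.mem_iSup_of_mem i ⟨x, rfl⟩
    · apply iSup_le
      rintro i y ⟨x, rfl⟩
      refine ⟨fun r => if part r = i then x r else 0, ?_⟩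
      rw [incid_apply, incidSub_apply, Finset.sum_filter]
      apply Finset.sum_congr rfl
      intro r _
      by_cases h : part r = i <;> simp [h]
  · intro f hf hsum i
    funext c
    by_contra hne
    have hci : c ∈ cplxSet src tgt part i := by
      by_contra hc
      obtain ⟨x, hx⟩ := hf i
      exact hne (by rw [← hx]; exact incidSub_support src tgt part i x c hc)
    have hz : ∀ j, j ≠ i → f j c = 0 := by
      intro j hj
      obtain ⟨x, hx⟩ := hf j
      rw [← hx]
      apply incidSub_support
      intro hcj
      have := hC j i hj
      exact absurd (Set.mem_inter hcj hci) (by rw [this]; exact Set.notMem_empty c)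
    have : (∑ j, f j) c = f i c := by
      rw [Finset.sum_apply]
      exact Finset.sum_eq_single i (fun j _ hj => hz j hj) (fun h => absurd (Finset.mem_univ i) h)
    rw [hsum] at this
    exact hne this.symm
end

section
/- Path lemma for PBS decompositions: let 𝒟 be a decomposition of a CRN and suppose y' − x₁ − ⋯ − x_q − y'' is a path in the underlying graph of 𝒩 such that y' and y'' are common complexes while x₁, …, x_q are not common complexes. Then there exists a subnetwork 𝒩ᵢ containing the whole path; in particular y' and y'' are connected in 𝒩ᵢ. -/
open Finset

/-- path lemma for PBS decompositions: if `y' − x₁ − ⋯ − x_q − y''` is a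
path in the underlying graph of `𝒩` whose endpoints are common complexes while all
internal complexes are non-common, then some subnetwork `𝒩ᵢ` contains the whole path
(in particular `y'` and `y''` are connected in `𝒩ᵢ`). -/
theorem stmt10 {C R : Type} [Fintype C] [Fintype R]
    (src tgt : R → C)
    (hloop : ∀ r, src r ≠ tgt r)
    {k : ℕ} (part : R → Fin k)
    (hPBS : ∃ b c : ℕ, b ≤ c ∧ ∀ i j : Fin k, i ≠ j →
      Nat.card ↥(cplxSet src tgt part i ∩ cplxSet src tgt part j) = b ∨
      Nat.card ↥(cplxSet src tgt part i ∩ cplxSet src tgt part j) = c)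
    (q : ℕ) (hq : 1 ≤ q) (w : Fin (q + 2) → C)
    (hfirst : w 0 ∈ commonSet src tgt part)
    (hlast : w (Fin.last (q + 1)) ∈ commonSet src tgt part)
    (hinternal : ∀ t : Fin (q + 2), t ≠ 0 → t ≠ Fin.last (q + 1) →
      w t ∉ commonSet src tgt part)
    (hpath : ∀ t : Fin (q + 1), ∃ r,
      (src r = w t.castSucc ∧ tgt r = w t.succ) ∨
      (src r = w t.succ ∧ tgt r = w t.castSucc)) :
    ∃ i : Fin k, ∀ t : Fin (q + 1), ∃ r, part r = i ∧
      ((src r = w t.castSucc ∧ tgt r = w t.succ) ∨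
       (src r = w t.succ ∧ tgt r = w t.castSucc)) := by
  choose r hr using hpath
  refine ⟨part (r 0), fun t => ⟨r t, ?_, hr t⟩⟩
  have key : ∀ n (hn : n < q + 1), part (r ⟨n, hn⟩) = part (r 0) := by
    intro n
    induction n with
    | zero =>
      intro hn
      congr 1
    | succ m ih =>
      intro hn
      have hm : m < q + 1 := by omega
      rw [← ih hm]
      by_contra hne
      have h1 : w ⟨m + 1, by omega⟩ ∈ cplxSet src tgt part (part (r ⟨m, hm⟩)) := by
        refine ⟨r ⟨m, hm⟩, rfl, ?_⟩
        have hsucc : (⟨m, hm⟩ : Fin (q + 1)).succ = ⟨m + 1, by omega⟩ := rfl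
        rcases hr ⟨m, hm⟩ with ⟨_, h⟩ | ⟨h, _⟩
        · right; rw [h, hsucc]
        · left; rw [h, hsucc]
      have h2 : w ⟨m + 1, by omega⟩ ∈ cplxSet src tgt part (part (r ⟨m + 1, hn⟩)) := by
        refine ⟨r ⟨m + 1, hn⟩, rfl, ?_⟩
        have hcs : (⟨m + 1, hn⟩ : Fin (q + 1)).castSucc = ⟨m + 1, by omega⟩ := rfl
        rcases hr ⟨m + 1, hn⟩ with ⟨h, _⟩ | ⟨_, h⟩
        · left; rw [h, hcs]
        · right; rw [h, hcs]
      exact hinternal ⟨m + 1, by omega⟩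
        (by simp [Fin.ext_iff]) (by simp [Fin.ext_iff, Fin.last]; omega)
        ⟨part (r ⟨m + 1, hn⟩), part (r ⟨m, hm⟩), hne, h2, h1⟩
  have := key t.1 t.2
  simpa using this
end

section
/- Path lemma: let 𝒟 be a decomposition of a CRN and P : y − x₁ − ⋯ − x_q a path in the underlying graph of 𝒩 such that y is a common complex while x₁, …, x_q are not. Then exactly one subnetwork 𝒩ᵢ contains the path P. -/
open Finset

/-- path lemma: if `P : y − x₁ − ⋯ − x_q` is a path in the underlying
graph of `𝒩` such that `y` is a common complex while `x₁, …, x_q` are not, then exactly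
one subnetwork `𝒩ᵢ` contains the path `P`. -/
theorem stmt11 {C R : Type} [Fintype C] [Fintype R]
    (src tgt : R → C)
    (hloop : ∀ r, src r ≠ tgt r)
    {k : ℕ} (part : R → Fin k)
    (q : ℕ) (hq : 1 ≤ q) (w : Fin (q + 1) → C)
    (hfirst : w 0 ∈ commonSet src tgt part)
    (hrest : ∀ t : Fin (q + 1), t ≠ 0 → w t ∉ commonSet src tgt part)
    (hpath : ∀ t : Fin q, ∃ r,
      (src r = w t.castSucc ∧ tgt r = w t.succ) ∨
      (src r = w t.succ ∧ tgt r = w t.castSucc)) :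
    ∃! i : Fin k, ∀ t : Fin q, ∃ r, part r = i ∧
      ((src r = w t.castSucc ∧ tgt r = w t.succ) ∨
       (src r = w t.succ ∧ tgt r = w t.castSucc)) := by
  have key : ∀ (c : C), c ∉ commonSet src tgt part → ∀ r r' : R,
      (src r = c ∨ tgt r = c) → (src r' = c ∨ tgt r' = c) → part r = part r' := by
    intro c hc r r' hr hr'
    by_contra h
    exact hc ⟨part r, part r', h, ⟨r, rfl, hr⟩, ⟨r', rfl, hr'⟩⟩
  choose r hr using hpath
  have hinv : ∀ t : Fin q, src (r t) = w t.succ ∨ tgt (r t) = w t.succ := by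
    intro t
    rcases hr t with ⟨h1, h2⟩ | ⟨h1, h2⟩
    · exact Or.inr h2
    · exact Or.inl h1
  have hinv' : ∀ t : Fin q, src (r t) = w t.castSucc ∨ tgt (r t) = w t.castSucc := by
    intro t
    rcases hr t with ⟨h1, h2⟩ | ⟨h1, h2⟩
    · exact Or.inl h1
    · exact Or.inr h2
  have hconst : ∀ n (hn : n < q), part (r ⟨n, hn⟩) = part (r ⟨0, hq⟩) := by
    intro n
    induction n with
    | zero => intro hn; rfl
    | succ m ih =>
      intro hn
      have hm : m < q := by omega
      have h1 : (⟨m + 1, hn⟩ : Fin q).castSucc = (⟨m, hm⟩ : Fin q).succ := rfl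
      have h2 := key (w (⟨m, hm⟩ : Fin q).succ) (hrest _ (Fin.succ_ne_zero _))
        (r ⟨m + 1, hn⟩) (r ⟨m, hm⟩) (h1 ▸ hinv' ⟨m + 1, hn⟩) (hinv ⟨m, hm⟩)
      rw [h2, ih hm]
  refine ⟨part (r ⟨0, hq⟩), fun t => ⟨r t, hconst t.1 t.2, hr t⟩, ?_⟩
  intro j hj
  obtain ⟨r', hr'1, hr'2⟩ := hj ⟨0, hq⟩
  have h1 : src r' = w (⟨0, hq⟩ : Fin q).succ ∨ tgt r' = w (⟨0, hq⟩ : Fin q).succ := by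
    rcases hr'2 with ⟨a, b⟩ | ⟨a, b⟩
    · exact Or.inr b
    · exact Or.inl a
  rw [← hr'1]
  exact key _ (hrest _ (Fin.succ_ne_zero _)) r' (r ⟨0, hq⟩) h1 (hinv ⟨0, hq⟩)
end

section
/- Structure theorem for PBS decompositions: let 𝒟 : 𝒩 = 𝒩₁ ∪ ⋯ ∪ 𝒩ₖ be a pairwise binary-sized decomposition such that at least one linkage class of 𝒩 contains no common complex. Let 𝒩' and 𝒩ᵢ' be obtained from 𝒩 and 𝒩ᵢ by removing all linkage classes that contain a common complex. Then, provided 𝒩' = 𝒩₁' ∪ ⋯ ∪ 𝒩ₖ' is non-trivial, it is a 𝒞-decomposition (the remaining subnetworks have pairwise disjoint complex sets). -/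
open Finset

/-- A reaction of subnetwork `i` survives the removal of the `𝒞_𝒟`-linkage classes of
`𝒩ᵢ` iff no common complex is reachable from it in the underlying graph of `𝒩ᵢ`. -/
def keepSub {C R : Type} (src tgt : R → C) {k : ℕ} (part : R → Fin k) (i : Fin k)
    (r : R) : Prop :=
  ∀ c', (subGraph src tgt part i).Reachable (src r) c' → c' ∉ commonSet src tgt part

/-- A reaction of `𝒩` survives the removal of the `𝒞_𝒟`-linkage classes of `𝒩`. -/
def keepParent {C R : Type} (src tgt : R → C) {k : ℕ} (part : R → Fin k) (r : R) : Prop :=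
  ∀ c', (parentGraph src tgt).Reachable (src r) c' → c' ∉ commonSet src tgt part


lemma sub_le_parent {C R : Type} (src tgt : R → C) {k : ℕ} (part : R → Fin k) (i : Fin k) :
    subGraph src tgt part i ≤ parentGraph src tgt := by
  intro a b hab
  rw [subGraph, SimpleGraph.fromRel_adj] at hab
  rw [parentGraph, SimpleGraph.fromRel_adj]
  obtain ⟨hne, h⟩ := hab
  refine ⟨hne, ?_⟩
  rcases h with ⟨r, _, h1, h2⟩ | ⟨r, _, h1, h2⟩
  · exact Or.inl ⟨r, h1, h2⟩
  · exact Or.inr ⟨r, h1, h2⟩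

lemma reach_mem_cplx {C R : Type} (src tgt : R → C) {k : ℕ} (part : R → Fin k) (i : Fin k) :
    ∀ {a u : C}, (subGraph src tgt part i).Walk a u →
      a ∈ cplxSet src tgt part i → u ∈ cplxSet src tgt part i := by
  intro a u w
  induction w with
  | nil => exact id
  | cons h p ih =>
    intro _
    apply ih
    rw [subGraph, SimpleGraph.fromRel_adj] at h
    obtain ⟨-, h⟩ := h
    rcases h with ⟨r, hp, h1, h2⟩ | ⟨r, hp, h1, h2⟩
    · exact ⟨r, hp, Or.inr h2⟩
    · exact ⟨r, hp, Or.inl h1⟩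

lemma key_lemma {C R : Type} (src tgt : R → C) {k : ℕ} (part : R → Fin k) (i : Fin k) (r : R)
    (hpart : part r = i) (hk : keepSub src tgt part i r) :
    ∀ {a c' : C}, (parentGraph src tgt).Walk a c' →
      (subGraph src tgt part i).Reachable (src r) a → c' ∉ commonSet src tgt part := by
  intro a c' w
  induction w with
  | nil => intro hra; exact hk _ hra
  | @cons u v w' hadj p ih =>
    intro hra hcom
    rw [parentGraph, SimpleGraph.fromRel_adj] at hadj
    obtain ⟨hne, hrel⟩ := hadj
    have hsrc : src r ∈ cplxSet src tgt part i := ⟨r, hpart, Or.inl rfl⟩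
    have hu : u ∈ cplxSet src tgt part i := by
      obtain ⟨w0⟩ := hra
      exact reach_mem_cplx src tgt part i w0 hsrc
    rcases hrel with ⟨r', h1, h2⟩ | ⟨r', h1, h2⟩
    · by_cases hpi : part r' = i
      · have hadj' : (subGraph src tgt part i).Adj u v := by
          rw [subGraph, SimpleGraph.fromRel_adj]
          exact ⟨hne, Or.inl ⟨r', hpi, h1, h2⟩⟩
        exact ih (hra.trans hadj'.reachable) hcom
      · exact hk u hra ⟨i, part r', fun h => hpi h.symm, hu, ⟨r', rfl, Or.inl h1⟩⟩
    · by_cases hpi : part r' = i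
      · have hadj' : (subGraph src tgt part i).Adj u v := by
          rw [subGraph, SimpleGraph.fromRel_adj]
          exact ⟨hne, Or.inr ⟨r', hpi, h1, h2⟩⟩
        exact ih (hra.trans hadj'.reachable) hcom
      · exact hk u hra ⟨i, part r', fun h => hpi h.symm, hu, ⟨r', rfl, Or.inr h2⟩⟩

/-- structure theorem for PBS decompositions: let `𝒟` be a PBS
decomposition such that at least one linkage class of `𝒩` contains no common complex,
and let `𝒩'`, `𝒩ᵢ'` be obtained by removing the `𝒞_𝒟`-linkage classes. If the resulting
decomposition is non-trivial, then it is a decomposition of `𝒩'` and a 𝒞-decomposition: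
the remaining subnetworks have pairwise disjoint complex sets. -/
theorem stmt12 {C R : Type} [Fintype C] [Fintype R]
    (src tgt : R → C)
    (hloop : ∀ r, src r ≠ tgt r)
    (hiso : ∀ c : C, ∃ r, src r = c ∨ tgt r = c)
    {k : ℕ} (part : R → Fin k)
    (hPBS : ∃ b c : ℕ, b ≤ c ∧ ∀ i j : Fin k, i ≠ j →
      Nat.card ↥(cplxSet src tgt part i ∩ cplxSet src tgt part j) = b ∨
      Nat.card ↥(cplxSet src tgt part i ∩ cplxSet src tgt part j) = c)
    (hfree : ∃ c₀ : C, (∃ r, src r = c₀ ∨ tgt r = c₀) ∧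
      ∀ c', (parentGraph src tgt).Reachable c₀ c' → c' ∉ commonSet src tgt part)
    (hnontriv : ∃ i j : Fin k, i ≠ j ∧
      (∃ r, part r = i ∧ keepSub src tgt part i r) ∧
      (∃ r, part r = j ∧ keepSub src tgt part j r)) :
    ({r : R | keepParent src tgt part r} =
        ⋃ i : Fin k, {r : R | part r = i ∧ keepSub src tgt part i r}) ∧
    (∀ i j : Fin k, i ≠ j →
      {c : C | ∃ r, part r = i ∧ keepSub src tgt part i r ∧ (src r = c ∨ tgt r = c)} ∩
      {c : C | ∃ r, part r = j ∧ keepSub src tgt part j r ∧ (src r = c ∨ tgt r = c)} = ∅) := by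
  constructor
  · ext r
    simp only [Set.mem_setOf_eq, Set.mem_iUnion]
    constructor
    · intro h
      exact ⟨part r, rfl, fun c' hrc => h c' (hrc.mono (sub_le_parent src tgt part (part r)))⟩
    · rintro ⟨i, hpi, hks⟩ c' hrc
      obtain ⟨w⟩ := hrc
      exact key_lemma src tgt part i r hpi hks w (SimpleGraph.Reachable.refl _)
  · intro i j hij
    ext c
    simp only [Set.mem_inter_iff, Set.mem_setOf_eq, Set.mem_empty_iff_false, iff_false,
      not_and]
    rintro ⟨r, hpi, hki, hci⟩ ⟨r', hpj, hkj, hcj⟩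
    have hcc : c ∈ commonSet src tgt part := ⟨i, j, hij, ⟨r, hpi, hci⟩, ⟨r', hpj, hcj⟩⟩
    have hreach : (subGraph src tgt part i).Reachable (src r) c := by
      rcases hci with h | h
      · exact h ▸ SimpleGraph.Reachable.refl _
      · refine SimpleGraph.Adj.reachable ?_
        rw [subGraph, SimpleGraph.fromRel_adj]
        exact ⟨h ▸ hloop r, Or.inl ⟨r, hpi, rfl, h⟩⟩
    exact hki c hreach hcc
end

section
/- If a chemical kinetic system (𝒩, K) is of PLP type and of CLP type with P_E = P_Z (bi-LP), then it is absolutely complex balanced: every positive equilibrium is a complex balanced equilibrium, i.e., E₊(𝒩, K) = Z₊(𝒩, K). -/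
open Finset

/-- Set of positive equilibria `E₊(𝒩, K)`: positive compositions where the species
formation rate `f(x) = Σ_r K_r(x)(y_{tgt r} − y_{src r})` vanishes (`Y c` is the vector
of stoichiometric coefficients of the complex `c`). -/
def Eplus {S C R : Type} [Fintype R] (src tgt : R → C) (Y : C → (S → ℝ))
    (K : R → (S → ℝ) → ℝ) : Set (S → ℝ) :=
  {x | (∀ s, 0 < x s) ∧ ∑ r : R, K r x • (Y (tgt r) - Y (src r)) = 0}

/-- Set of complex balanced equilibria `Z₊(𝒩, K)`: positive compositions where the
complex formation rate `g(x) = Σ_r K_r(x)(ω_{tgt r} − ω_{src r})` vanishes. -/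
def Zplus {S C R : Type} [Fintype R] [DecidableEq C] (src tgt : R → C)
    (K : R → (S → ℝ) → ℝ) : Set (S → ℝ) :=
  {x | (∀ s, 0 < x s) ∧
    ∑ r : R, K r x • ((Pi.single (tgt r) 1 - Pi.single (src r) 1 : C → ℝ)) = 0}

/-- The "orthogonal complement" of a subspace of `ℝ^𝒮` w.r.t. the standard scalar
product. -/
def perp {S : Type} [Fintype S] (U : Submodule ℝ (S → ℝ)) : Set (S → ℝ) :=
  {v | ∀ u ∈ U, ∑ s, v s * u s = 0}

/-- a bi-LP chemical kinetic system (of PLP type and of CLP type with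
`P_E = P_Z`) is absolutely complex balanced: `E₊(𝒩, K) = Z₊(𝒩, K)`. -/
theorem stmt19 {S C R : Type} [Fintype S] [Fintype C] [Fintype R] [DecidableEq C]
    (src tgt : R → C) (Y : C → (S → ℝ)) (K : R → (S → ℝ) → ℝ)
    (PE PZ : Submodule ℝ (S → ℝ)) (hP : PE = PZ)
    -- PLP type:
    (xE : S → ℝ) (hxE : xE ∈ Eplus src tgt Y K)
    (hE : Eplus src tgt Y K =
      {x | (∀ s, 0 < x s) ∧ (fun s => Real.log (x s) - Real.log (xE s)) ∈ perp PE})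
    -- CLP type:
    (xZ : S → ℝ) (hxZ : xZ ∈ Zplus src tgt K)
    (hZ : Zplus src tgt K =
      {x | (∀ s, 0 < x s) ∧ (fun s => Real.log (x s) - Real.log (xZ s)) ∈ perp PZ}) :
    Eplus src tgt Y K = Zplus src tgt K := by
  subst hP
  -- Z ⊆ E : complex balanced implies equilibrium
  have key : ∀ x, x ∈ Zplus src tgt K → x ∈ Eplus src tgt Y K := by
    intro x hx
    refine ⟨hx.1, ?_⟩
    have hg := hx.2
    have hgc : ∀ c, (∑ r : R, K r x *
        ((Pi.single (tgt r) 1 - Pi.single (src r) 1 : C → ℝ)) c) = 0 := by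
      intro c
      have := congrFun hg c
      simpa [Finset.sum_apply] using this
    funext s
    have hrw : (∑ r : R, K r x • (Y (tgt r) - Y (src r))) s
        = ∑ c : C, (∑ r : R, K r x *
            ((Pi.single (tgt r) 1 - Pi.single (src r) 1 : C → ℝ)) c) * Y c s := by
      simp only [Finset.sum_apply, Pi.smul_apply, Pi.sub_apply, smul_eq_mul,
        Finset.sum_mul]
      rw [Finset.sum_comm]
      refine Finset.sum_congr rfl fun r _ => ?_
      have h1 : ∀ c0 : C, (∑ c : C, (Pi.single c0 1 : C → ℝ) c * Y c s) = Y c0 s := by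
        intro c0
        simp [Pi.single_apply, ite_mul]
      calc K r x * (Y (tgt r) s - Y (src r) s)
          = K r x * ((∑ c : C, (Pi.single (tgt r) 1 : C → ℝ) c * Y c s)
            - (∑ c : C, (Pi.single (src r) 1 : C → ℝ) c * Y c s)) := by rw [h1, h1]
        _ = ∑ c : C, K r x * ((Pi.single (tgt r) 1 - Pi.single (src r) 1 : C → ℝ)) c
              * Y c s := by
            rw [← Finset.sum_sub_distrib, Finset.mul_sum]
            refine Finset.sum_congr rfl fun c _ => ?_
            simp [Pi.sub_apply]; ring
    rw [hrw]
    simp only [hgc, zero_mul, Finset.sum_const_zero, Pi.zero_apply]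
  -- difference transfer in perp
  have tri : ∀ a b c : S → ℝ, (fun s => a s - b s) ∈ perp PE →
      (fun s => c s - b s) ∈ perp PE → (fun s => a s - c s) ∈ perp PE := by
    intro a b c h1 h2 u hu
    have e1 := h1 u hu
    have e2 := h2 u hu
    have : (∑ s, (a s - c s) * u s)
        = (∑ s, (a s - b s) * u s) - ∑ s, (c s - b s) * u s := by
      rw [← Finset.sum_sub_distrib]
      exact Finset.sum_congr rfl fun s _ => by ring
    rw [this, e1, e2, sub_zero]
  have hxZE : xZ ∈ Eplus src tgt Y K := key xZ hxZ
  have hd : (fun s => Real.log (xZ s) - Real.log (xE s)) ∈ perp PE := by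
    rw [hE] at hxZE
    exact hxZE.2
  have hd' : (fun s => Real.log (xE s) - Real.log (xZ s)) ∈ perp PE := by
    refine tri _ (fun s => Real.log (xE s)) _ ?_ hd
    intro u hu
    simp
  ext x
  rw [hE, hZ]
  constructor
  · rintro ⟨hpos, h⟩
    exact ⟨hpos, tri _ _ _ h hd⟩
  · rintro ⟨hpos, h⟩
    exact ⟨hpos, tri _ _ _ h hd'⟩
end
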